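/- arXiv:2011.05207 — 4 statements merged into one kernel-verified Lean document; each statement's English description precedes it below -/
import Mathlib

section
/- Let λ : [0,T] → ℝ be twice differentiable with λ''(t) ≥ 2ρ λ'(t) on [0,T], where ρ ≠ 0. Then λ(T) − λ(0) ≤ ((1 − e^{−2ρT})/(2ρ)) λ'(T). -/
/-!
The weight `exp (-2ρt)` turns `λ'' ≥ 2ρλ'` into the monotonicity of `exp (-2ρt) λ'(t)`, so
`λ'(t) ≤ exp (2ρ(t - T)) λ'(T)` on `[0, T]`. Comparing derivatives, `λ(T) - λ(0)` is at most the
increment of an antiderivative of the right-hand side, `λ'(T) exp (2ρ(t - T)) / (2ρ)`, over `[0, T]`.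
-/

open Real Set

section DerivComparison

variable {a b : ℝ}

theorem monotoneOn_Icc_of_hasDerivAt_nonneg {u u' : ℝ → ℝ}
    (hu : ∀ t ∈ Icc a b, HasDerivAt u (u' t) t) (hu' : ∀ t ∈ Ioo a b, 0 ≤ u' t) :
    MonotoneOn u (Icc a b) := by
  refine monotoneOn_of_hasDerivWithinAt_nonneg (f' := u') (convex_Icc a b)
    (fun t ht => (hu t ht).continuousAt.continuousWithinAt) (fun t ht => ?_) ?_
  · rw [interior_Icc] at ht ⊢
    exact (hu t (Ioo_subset_Icc_self ht)).hasDerivWithinAt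
  · simpa only [interior_Icc] using hu'

theorem sub_le_sub_of_hasDerivAt_le {f g f' g' : ℝ → ℝ} (hab : a ≤ b)
    (hf : ∀ t ∈ Icc a b, HasDerivAt f (f' t) t) (hg : ∀ t ∈ Icc a b, HasDerivAt g (g' t) t)
    (hle : ∀ t ∈ Ioo a b, f' t ≤ g' t) :
    f b - f a ≤ g b - g a := by
  have hmono : MonotoneOn (fun t => g t - f t) (Icc a b) :=
    monotoneOn_Icc_of_hasDerivAt_nonneg (fun t ht => (hg t ht).sub (hf t ht))
      (fun t ht => sub_nonneg.mpr (hle t ht))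
  linarith [hmono (left_mem_Icc.mpr hab) (right_mem_Icc.mpr hab) hab]

theorem monotoneOn_exp_neg_mul_mul_of_mul_le_deriv {u u' : ℝ → ℝ} {c : ℝ}
    (hu : ∀ t ∈ Icc a b, HasDerivAt u (u' t) t) (hle : ∀ t ∈ Ioo a b, c * u t ≤ u' t) :
    MonotoneOn (fun t => exp (-c * t) * u t) (Icc a b) := by
  have hderiv : ∀ t ∈ Icc a b,
      HasDerivAt (fun t => exp (-c * t) * u t) (exp (-c * t) * (u' t - c * u t)) t := by
    intro t ht
    have hexp : HasDerivAt (fun t => exp (-c * t)) (exp (-c * t) * -c) t := by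
      simpa using ((hasDerivAt_id t).const_mul (-c)).exp
    exact (hexp.mul (hu t ht)).congr_deriv (by ring)
  exact monotoneOn_Icc_of_hasDerivAt_nonneg hderiv
    (fun t ht => mul_nonneg (exp_pos _).le (sub_nonneg.mpr (hle t ht)))

theorem le_exp_mul_sub_mul_of_mul_le_deriv {u u' : ℝ → ℝ} {c t : ℝ}
    (hu : ∀ t ∈ Icc a b, HasDerivAt u (u' t) t) (hle : ∀ t ∈ Ioo a b, c * u t ≤ u' t)
    (ht : t ∈ Icc a b) :
    u t ≤ exp (c * (t - b)) * u b := by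
  have hmono := monotoneOn_exp_neg_mul_mul_of_mul_le_deriv hu hle ht
    (right_mem_Icc.mpr (ht.1.trans ht.2)) ht.2
  calc u t = exp (c * t) * (exp (-c * t) * u t) := by
        rw [← mul_assoc, ← exp_add]; ring_nf; simp
    _ ≤ exp (c * t) * (exp (-c * b) * u b) := mul_le_mul_of_nonneg_left hmono (exp_pos _).le
    _ = exp (c * (t - b)) * u b := by
        rw [← mul_assoc, ← exp_add]; ring_nf

end DerivComparison

theorem stmt_1 (T ρ : ℝ) (hT : 0 < T) (hρ : ρ ≠ 0) (f f' f'' : ℝ → ℝ)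
    (hderiv1 : ∀ t ∈ Icc (0:ℝ) T, HasDerivAt f (f' t) t)
    (hderiv2 : ∀ t ∈ Icc (0:ℝ) T, HasDerivAt f' (f'' t) t)
    (hineq : ∀ t ∈ Icc (0:ℝ) T, 2 * ρ * f' t ≤ f'' t) :
    f T - f 0 ≤ ((1 - Real.exp (-2 * ρ * T)) / (2 * ρ)) * f' T := by
  have hineq' : ∀ t ∈ Ioo 0 T, 2 * ρ * f' t ≤ f'' t :=
    fun t ht => hineq t (Ioo_subset_Icc_self ht)
  have hbound : ∀ t ∈ Ioo 0 T, f' t ≤ exp (2 * ρ * (t - T)) * f' T := fun t ht =>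
    le_exp_mul_sub_mul_of_mul_le_deriv hderiv2 hineq' (Ioo_subset_Icc_self ht)
  have hprimitive : ∀ t ∈ Icc 0 T, HasDerivAt (fun t => exp (2 * ρ * (t - T)) * f' T / (2 * ρ))
      (exp (2 * ρ * (t - T)) * f' T) t := by
    intro t _
    have hexp : HasDerivAt (fun t => exp (2 * ρ * (t - T)))
        (exp (2 * ρ * (t - T)) * (2 * ρ)) t := by
      simpa using (((hasDerivAt_id t).sub_const T).const_mul (2 * ρ)).exp
    exact ((hexp.mul_const (f' T)).div_const (2 * ρ)).congr_deriv (by field_simp)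
  calc f T - f 0
      ≤ exp (2 * ρ * (T - T)) * f' T / (2 * ρ) - exp (2 * ρ * (0 - T)) * f' T / (2 * ρ) :=
        sub_le_sub_of_hasDerivAt_le hT.le hderiv1 hprimitive hbound
    _ = ((1 - exp (-2 * ρ * T)) / (2 * ρ)) * f' T := by
        rw [sub_self, mul_zero, exp_zero]; ring_nf
end

section
/- Let Φ : [0,T] → ℝ be twice differentiable with Φ''(t) ≥ Φ'(t)²/(2n) on [0,T] for some n > 0. Then exp((Φ(T) − Φ(0))/(2n)) ≤ 1 + (T/(2n)) Φ'(T). -/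
/-!
The hypothesis says exactly that `g = exp (-Φ / (2n))` is concave on `[0, T]`, since
`g'' = g · (Φ'² / (2n) - Φ'') / (2n) ≤ 0`. Hence `g` lies below its tangent at `T`, giving
`g 0 ≤ g T - T · g' T`; multiplying by `exp (Φ T / (2n))` yields the claim.
-/

open Real Set

theorem HasDerivAt.exp_neg_div {Φ : ℝ → ℝ} {φ t : ℝ} (c : ℝ) (h : HasDerivAt Φ φ t) :
    HasDerivAt (fun s => Real.exp (-Φ s / c)) (-φ / c * Real.exp (-Φ t / c)) t := by
  simpa only [Pi.neg_apply, mul_comm] using (h.neg.div_const c).exp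

theorem concaveOn_exp_neg_div {s : Set ℝ} (hs : Convex ℝ s) {c : ℝ} (hc : 0 < c)
    {Φ Φ' Φ'' : ℝ → ℝ} (hΦ : ∀ t ∈ s, HasDerivAt Φ (Φ' t) t)
    (hΦ' : ∀ t ∈ s, HasDerivAt Φ' (Φ'' t) t) (h : ∀ t ∈ s, Φ' t ^ 2 / c ≤ Φ'' t) :
    ConcaveOn ℝ s (fun t => exp (-Φ t / c)) := by
  have hs' : interior s ⊆ s := interior_subset
  refine concaveOn_of_hasDerivWithinAt2_nonpos hs
    (fun t ht => ((hΦ t ht).exp_neg_div c).continuousAt.continuousWithinAt)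
    (fun t ht => ((hΦ t (hs' ht)).exp_neg_div c).hasDerivWithinAt)
    (fun t ht => (((hΦ' t (hs' ht)).neg.div_const c).mul
      ((hΦ t (hs' ht)).exp_neg_div c)).hasDerivWithinAt) (fun t ht => ?_)
  have hΦt : Φ' t ^ 2 / c - Φ'' t ≤ 0 := sub_nonpos.2 (h t (hs' ht))
  calc -Φ'' t / c * exp (-Φ t / c) + -Φ' t / c * (-Φ' t / c * exp (-Φ t / c))
      = exp (-Φ t / c) * (Φ' t ^ 2 / c - Φ'' t) / c := by field_simp; ring
    _ ≤ 0 := div_nonpos_of_nonpos_of_nonneg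
        (mul_nonpos_of_nonneg_of_nonpos (exp_pos _).le hΦt) hc.le

theorem stmt_4 (T n : ℝ) (hT : 0 < T) (hn : 0 < n) (Φ Φ' Φ'' : ℝ → ℝ)
    (hderiv1 : ∀ t ∈ Icc (0:ℝ) T, HasDerivAt Φ (Φ' t) t)
    (hderiv2 : ∀ t ∈ Icc (0:ℝ) T, HasDerivAt Φ' (Φ'' t) t)
    (hineq : ∀ t ∈ Icc (0:ℝ) T, (Φ' t) ^ 2 / (2 * n) ≤ Φ'' t) :
    Real.exp ((Φ T - Φ 0) / (2 * n)) ≤ 1 + (T / (2 * n)) * Φ' T := by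
  set c := 2 * n
  have hT' : T ∈ Icc 0 T := right_mem_Icc.2 hT.le
  have htangent := (concaveOn_exp_neg_div (convex_Icc 0 T) (by positivity) hderiv1 hderiv2
    hineq).le_slope_of_hasDerivAt (left_mem_Icc.2 hT.le) hT' hT ((hderiv1 T hT').exp_neg_div c)
  rw [slope_def_field, sub_zero, le_div_iff₀ hT] at htangent
  have hinv : exp (Φ T / c) * exp (-Φ T / c) = 1 := by
    rw [← exp_add, neg_div, add_neg_cancel, exp_zero]
  calc exp ((Φ T - Φ 0) / c) = exp (Φ T / c) * exp (-Φ 0 / c) := by rw [← exp_add]; ring_nf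
    _ ≤ exp (Φ T / c) * (exp (-Φ T / c) - -Φ' T / c * exp (-Φ T / c) * T) := by
        gcongr; linarith
    _ = 1 + T / c * Φ' T := by linear_combination (1 + T / c * Φ' T) * hinv
end

section
/- Let Φ : [0,T] → ℝ be twice differentiable with Φ''(t) ≥ Φ'(t)²/(2n) on [0,T] for some n > 0. Then exp((Φ(0) − Φ(T))/(2n)) ≤ 1 − (T/(2n)) Φ'(0). -/
/-!
The substitution `g = exp (-Φ / (2n))` turns the differential inequality into concavity:
`g'' = (Φ'² / (2n)² - Φ'' / (2n)) g ≤ 0`. A concave function lies below its tangent line at `0`,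
so `g T ≤ g 0 + T g' 0 = (1 - T Φ' 0 / (2n)) g 0`, and dividing by `g 0` gives the claim.
-/

open Real Set

section TangentLine

variable {f f' f'' : ℝ → ℝ} {a b : ℝ}

lemma monotoneOn_Icc_of_hasDerivAt_nonneg_s5 (hf : ∀ t ∈ Icc a b, HasDerivAt f (f' t) t)
    (hf' : ∀ t ∈ Ioo a b, 0 ≤ f' t) : MonotoneOn f (Icc a b) := by
  refine monotoneOn_of_hasDerivWithinAt_nonneg (convex_Icc a b)
    (fun t ht ↦ (hf t ht).continuousAt.continuousWithinAt) (fun t ht ↦ ?_) (by simpa using hf')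
  rw [interior_Icc] at ht ⊢
  exact (hf t (Ioo_subset_Icc_self ht)).hasDerivWithinAt

lemma le_add_mul_deriv_of_deriv2_nonpos (hab : a ≤ b)
    (hf : ∀ t ∈ Icc a b, HasDerivAt f (f' t) t) (hf' : ∀ t ∈ Icc a b, HasDerivAt f' (f'' t) t)
    (hf'' : ∀ t ∈ Ioo a b, f'' t ≤ 0) : f b ≤ f a + (b - a) * f' a := by
  have hanti : AntitoneOn f' (Icc a b) := fun x hx y hy hxy ↦ by
    simpa using monotoneOn_Icc_of_hasDerivAt_nonneg_s5 (fun t ht ↦ (hf' t ht).neg)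
      (fun t ht ↦ neg_nonneg.2 (hf'' t ht)) hx hy hxy
  have ha : a ∈ Icc a b := left_mem_Icc.2 hab
  have hgap : MonotoneOn (fun t ↦ f a + (t - a) * f' a - f t) (Icc a b) :=
    monotoneOn_Icc_of_hasDerivAt_nonneg_s5 (f' := fun t ↦ f' a - f' t)
      (fun t ht ↦ by
        simpa using ((((hasDerivAt_id' t).sub_const a).mul_const (f' a)).const_add (f a)).fun_sub
          (hf t ht))
      (fun t ht ↦ sub_nonneg.2 (hanti ha (Ioo_subset_Icc_self ht) ht.1.le))
  have hgap_le := hgap ha (right_mem_Icc.2 hab) hab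
  simp only [sub_self, zero_mul, add_zero] at hgap_le
  linarith

end TangentLine

section ExpSubstitution

variable {Φ Φ' Φ'' : ℝ → ℝ} {c t : ℝ}

lemma hasDerivAt_exp_neg_div (h : HasDerivAt Φ (Φ' t) t) :
    HasDerivAt (fun s ↦ exp (-Φ s / c)) (-Φ' t / c * exp (-Φ t / c)) t := by
  simpa only [mul_comm] using (h.fun_neg.div_const c).exp

lemma hasDerivAt_deriv_exp_neg_div (h : HasDerivAt Φ (Φ' t) t) (h' : HasDerivAt Φ' (Φ'' t) t) :
    HasDerivAt (fun s ↦ -Φ' s / c * exp (-Φ s / c))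
      ((Φ' t ^ 2 / c ^ 2 - Φ'' t / c) * exp (-Φ t / c)) t :=
  ((h'.fun_neg.div_const c).fun_mul (hasDerivAt_exp_neg_div h)).congr_deriv (by ring)

end ExpSubstitution

lemma div_sq_sub_div_nonpos {x y c : ℝ} (hc : 0 < c) (h : x / c ≤ y) : x / c ^ 2 - y / c ≤ 0 := by
  rw [sub_nonpos, sq c, ← div_div]
  exact div_le_div_of_nonneg_right h hc.le

theorem stmt_5 (T n : ℝ) (hT : 0 < T) (hn : 0 < n) (Φ Φ' Φ'' : ℝ → ℝ)
    (hderiv1 : ∀ t ∈ Icc (0:ℝ) T, HasDerivAt Φ (Φ' t) t)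
    (hderiv2 : ∀ t ∈ Icc (0:ℝ) T, HasDerivAt Φ' (Φ'' t) t)
    (hineq : ∀ t ∈ Icc (0:ℝ) T, (Φ' t) ^ 2 / (2 * n) ≤ Φ'' t) :
    Real.exp ((Φ 0 - Φ T) / (2 * n)) ≤ 1 - (T / (2 * n)) * Φ' 0 := by
  have h2n : 0 < 2 * n := by positivity
  have htangent := le_add_mul_deriv_of_deriv2_nonpos hT.le
    (fun t ht ↦ hasDerivAt_exp_neg_div (c := 2 * n) (hderiv1 t ht))
    (fun t ht ↦ hasDerivAt_deriv_exp_neg_div (hderiv1 t ht) (hderiv2 t ht))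
    (fun t ht ↦ mul_nonpos_of_nonpos_of_nonneg
      (div_sq_sub_div_nonpos h2n (hineq t (Ioo_subset_Icc_self ht))) (exp_pos _).le)
  have hratio : exp ((Φ 0 - Φ T) / (2 * n)) = exp (-Φ T / (2 * n)) / exp (-Φ 0 / (2 * n)) := by
    rw [← exp_sub]; ring_nf
  rw [hratio, div_le_iff₀ (exp_pos _)]
  calc exp (-Φ T / (2 * n))
      ≤ exp (-Φ 0 / (2 * n)) + (T - 0) * (-Φ' 0 / (2 * n) * exp (-Φ 0 / (2 * n))) := htangent
    _ = (1 - T / (2 * n) * Φ' 0) * exp (-Φ 0 / (2 * n)) := by ring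
end

section
/- Let F : ℝ^d → ℝ be C² and (ρ,∞)-convex, i.e. F''(x) ≥ ρ Id as quadratic forms for all x. Let X : [0,T] → ℝ^d be a C² solution of Newton's equation Ẍ(t) = F''(X(t))F'(X(t)), and define λ(t) = ∫₀ᵗ |Ẋ(s) + F'(X(s))|² ds. Then λ''(t) ≥ 2ρ λ'(t) for all t ∈ (0,T). -/
open Real Set InnerProductSpace
open scoped RealInnerProductSpace

/-!
Put `V = Ẋ + ∇F(X)`. Since the Hessian `H = F''` is symmetric, `∇(½‖∇F‖²) = H ∇F`, so Newton's
equation turns `V̇ = Ẍ + H Ẋ` into `V̇ = H V`. As `λ' = ‖V‖²`, this gives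
`λ'' = 2 ⟪H V, V⟫ ≥ 2ρ ‖V‖² = 2ρ λ'`.
-/

section Gradient

variable {E : Type*} [NormedAddCommGroup E] [InnerProductSpace ℝ E] [CompleteSpace E]
  {f : E → ℝ} {x : E}

theorem ContDiffAt.contDiffAt_gradient {n : WithTop ℕ∞} (hf : ContDiffAt ℝ (n + 1) f x) :
    ContDiffAt ℝ n (gradient f) x :=
  (toDual ℝ E).symm.contDiff.contDiffAt.comp x (hf.fderiv_right le_rfl)

theorem ContDiffAt.inner_fderiv_gradient_comm (hf : ContDiffAt ℝ 2 f x) (u v : E) :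
    ⟪fderiv ℝ (gradient f) x u, v⟫ = ⟪fderiv ℝ (gradient f) x v, u⟫ := by
  let J : StrongDual ℝ E ≃ₗᵢ[ℝ] E := (toDual ℝ E).symm
  have hcomp : fderiv ℝ (gradient f) x
      = (J.toContinuousLinearEquiv : StrongDual ℝ E →L[ℝ] E).comp (fderiv ℝ (fderiv ℝ f) x) :=
    J.comp_fderiv
  simp only [hcomp, ContinuousLinearMap.coe_comp, Function.comp_apply,
    ContinuousLinearEquiv.coe_coe, LinearIsometryEquiv.coe_toContinuousLinearEquiv, J]
  rw [toDual_symm_apply, toDual_symm_apply]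
  exact hf.isSymmSndFDerivAt (by simp [minSmoothness_of_isRCLikeNormedField]) u v

theorem ContDiffAt.gradient_norm_sq_gradient (hf : ContDiffAt ℝ 2 f x) :
    gradient (fun y => ‖gradient f y‖ ^ 2) x
      = (2 : ℝ) • fderiv ℝ (gradient f) x (gradient f x) := by
  have hgrad : HasFDerivAt (gradient f) (fderiv ℝ (gradient f) x) x :=
    (hf.contDiffAt_gradient.differentiableAt one_ne_zero).hasFDerivAt
  refine ext_inner_right ℝ fun v => ?_
  rw [inner_gradient_left, hgrad.norm_sq.fderiv, real_inner_smul_left,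
    hf.inner_fderiv_gradient_comm]
  simp

theorem hasDerivAt_deriv_add_gradient_comp {X : ℝ → E} {t : ℝ} (hf : ContDiffAt ℝ 2 f (X t))
    (hX : ContDiff ℝ 2 X)
    (hNewton : deriv (deriv X) t = (1 / 2 : ℝ) • gradient (fun x => ‖gradient f x‖ ^ 2) (X t)) :
    HasDerivAt (fun s => deriv X s + gradient f (X s))
      (fderiv ℝ (gradient f) (X t) (deriv X t + gradient f (X t))) t := by
  have hacc : deriv (deriv X) t = fderiv ℝ (gradient f) (X t) (gradient f (X t)) := by
    rw [hNewton, hf.gradient_norm_sq_gradient, smul_smul]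
    norm_num
  have hgrad : HasDerivAt (fun s => gradient f (X s))
      (fderiv ℝ (gradient f) (X t) (deriv X t)) t :=
    (hf.contDiffAt_gradient.differentiableAt one_ne_zero).hasFDerivAt.comp_hasDerivAt t
      ((hX.differentiable two_ne_zero) t).hasDerivAt
  rw [map_add, add_comm (fderiv ℝ (gradient f) (X t) (deriv X t))]
  exact (hacc ▸ (hX.differentiable_deriv_two t).hasDerivAt).add hgrad

end Gradient

theorem stmt_8_general (d : ℕ) (T ρ : ℝ)
    (F : EuclideanSpace ℝ (Fin d) → ℝ) (hF : ContDiff ℝ 2 F)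
    (hconv : ∀ x v : EuclideanSpace ℝ (Fin d),
      ρ * ‖v‖ ^ 2 ≤ ⟪fderiv ℝ (gradient F) x v, v⟫)
    (X : ℝ → EuclideanSpace ℝ (Fin d)) (hX : ContDiff ℝ 2 X)
    (hNewton : ∀ t ∈ Icc (0:ℝ) T,
      deriv (deriv X) t = (1/2 : ℝ) • gradient (fun x => ‖gradient F x‖ ^ 2) (X t)) :
    ∀ t ∈ Ioo (0:ℝ) T,
      2 * ρ * deriv (fun u => ∫ s in (0:ℝ)..u, ‖deriv X s + gradient F (X s)‖ ^ 2) t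
        ≤ deriv (deriv (fun u => ∫ s in (0:ℝ)..u, ‖deriv X s + gradient F (X s)‖ ^ 2)) t := by
  intro t ht
  set V := fun s => deriv X s + gradient F (X s)
  have hgradF : Continuous (gradient F) :=
    continuous_iff_continuousAt.2 fun x =>
      (hF.contDiffAt.contDiffAt_gradient (n := 1)).continuousAt
  have hVcont : Continuous V :=
    (hX.continuous_deriv one_le_two).add (hgradF.comp hX.continuous)
  have hderiv_integral : deriv (fun u => ∫ s in (0:ℝ)..u, ‖V s‖ ^ 2) = fun u => ‖V u‖ ^ 2 :=
    funext fun u => (hVcont.norm.pow 2).deriv_integral _ 0 u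
  have hV := hasDerivAt_deriv_add_gradient_comp hF.contDiffAt hX
    (hNewton t (Ioo_subset_Icc_self ht))
  rw [hderiv_integral, hV.norm_sq.deriv, real_inner_comm]
  linarith [hconv (X t) (V t)]

theorem stmt_8 (d : ℕ) (T ρ : ℝ) (hT : 0 < T)
    (F : EuclideanSpace ℝ (Fin d) → ℝ) (hF : ContDiff ℝ 2 F)
    (hconv : ∀ x v : EuclideanSpace ℝ (Fin d),
      ρ * ‖v‖ ^ 2 ≤ ⟪fderiv ℝ (gradient F) x v, v⟫)
    (X : ℝ → EuclideanSpace ℝ (Fin d)) (hX : ContDiff ℝ 2 X)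
    (hNewton : ∀ t ∈ Icc (0:ℝ) T,
      deriv (deriv X) t = (1/2 : ℝ) • gradient (fun x => ‖gradient F x‖ ^ 2) (X t)) :
    ∀ t ∈ Ioo (0:ℝ) T,
      2 * ρ * deriv (fun u => ∫ s in (0:ℝ)..u, ‖deriv X s + gradient F (X s)‖ ^ 2) t
        ≤ deriv (deriv (fun u => ∫ s in (0:ℝ)..u, ‖deriv X s + gradient F (X s)‖ ^ 2)) t :=
  stmt_8_general d T ρ F hF hconv X hX hNewton
end
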